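/- Let A be any subset of ℝⁿ, and let E₁, E₂ be linear subspaces of ℝⁿ with E₁ ⊇ E₂^⊥ (equivalently E₂ ⊇ E₁^⊥). Then P_{E₁ ∩ E₂}(A ∩ E₁) = (P_{E₂} A) ∩ E₁, where P_E denotes orthogonal projection onto the subspace E. -/

import Mathlib

open Metric Set

noncomputable section

abbrev Euc (n : ℕ) : Type := EuclideanSpace ℝ (Fin n)

/-- Orthogonal projection onto `F` as a map `ℝⁿ → ℝⁿ`. -/
def projCLM {n : ℕ} (F : Submodule ℝ (Euc n)) : Euc n →L[ℝ] Euc n :=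
  F.subtypeL.comp (F.orthogonalProjectionOnto)

lemma key {n : ℕ} {E₁ E₂ : Submodule ℝ (Euc n)} (h : E₂ᗮ ≤ E₁) {x : Euc n}
    (hx : x ∈ E₁) :
    projCLM E₂ x ∈ E₁ ⊓ E₂ ∧ projCLM (E₁ ⊓ E₂) x = projCLM E₂ x := by
  have hsub : x - projCLM E₂ x ∈ E₂ᗮ :=
    Submodule.sub_starProjection_mem_orthogonal (K := E₂) x
  have h1 : projCLM E₂ x ∈ E₁ := by
    have : x - (x - projCLM E₂ x) ∈ E₁ := E₁.sub_mem hx (h hsub)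
    simpa using this
  have hmem : projCLM E₂ x ∈ E₁ ⊓ E₂ := ⟨h1, (E₂.orthogonalProjectionOnto x).2⟩
  refine ⟨hmem, ?_⟩
  have : (E₁ ⊓ E₂).starProjection x = projCLM E₂ x :=
    Submodule.eq_starProjection_of_mem_orthogonal hmem
      (Submodule.orthogonal_le inf_le_right hsub)
  exact this

theorem stmt10 (n : ℕ) (A : Set (Euc n)) (E₁ E₂ : Submodule ℝ (Euc n))
    (h : E₂ᗮ ≤ E₁) :
    ⇑(projCLM (E₁ ⊓ E₂)) '' (A ∩ (E₁ : Set (Euc n))) =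
      (⇑(projCLM E₂) '' A) ∩ (E₁ : Set (Euc n)) := by
  ext y
  constructor
  · rintro ⟨x, ⟨hxA, hxE⟩, rfl⟩
    obtain ⟨hmem, heq⟩ := key h hxE
    exact ⟨⟨x, hxA, heq.symm⟩, by rw [heq]; exact hmem.1⟩
  · rintro ⟨⟨x, hxA, rfl⟩, hyE⟩
    have hxE : x ∈ E₁ := by
      have hsub : x - projCLM E₂ x ∈ E₂ᗮ :=
        Submodule.sub_starProjection_mem_orthogonal (K := E₂) x
      have : projCLM E₂ x + (x - projCLM E₂ x) ∈ E₁ := E₁.add_mem hyE (h hsub)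
      simpa using this
    exact ⟨x, ⟨hxA, hxE⟩, (key h hxE).2⟩
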